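/- If all scenarios of the interval transportation problem are feasible (i.e., sum_i s̲_i >= sum_j d̄_j), then the worst optimal value over all scenarios is attained at the scenario (C̄, s̲, d̄): f̄ = f(C̄, s̲, d̄). -/

import Mathlib

/-!
Each of the three pieces of data moves the optimal value monotonically: raising a cost can only
raise the cost of every plan, shrinking the supplies only removes plans, and a plan for demands `d'`
can be scaled column by column (by `d j / d' j ≤ 1`) to a plan for smaller demands `d` that is no
more expensive, since costs are non-negative. Feasibility of `(s̲, d̄)` makes all infima involved
infima of non-empty sets bounded below by `0`, so `(C̄, s̲, d̄)` dominates every scenario.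
-/

open Finset

/-- A feasible transportation plan for supplies `s` and demands `d`. -/
def IsPlan {m n : ℕ} (s : Fin m → ℝ) (d : Fin n → ℝ) (x : Fin m → Fin n → ℝ) : Prop :=
  (∀ i j, 0 ≤ x i j) ∧ (∀ i, ∑ j, x i j ≤ s i) ∧ (∀ j, ∑ i, x i j = d j)

/-- Total transportation cost of a plan `x` under cost matrix `C`. -/
def cost {m n : ℕ} (C x : Fin m → Fin n → ℝ) : ℝ :=
  ∑ i, ∑ j, C i j * x i j

/-- Optimal value of the transportation problem with data `(C, s, d)`. -/
noncomputable def optVal {m n : ℕ} (C : Fin m → Fin n → ℝ) (s : Fin m → ℝ)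
    (d : Fin n → ℝ) : ℝ :=
  sInf (cost C '' {x | IsPlan s d x})

section Transportation

variable {m n : ℕ}

lemma cost_nonneg {C x : Fin m → Fin n → ℝ} (hC : ∀ i j, 0 ≤ C i j)
    (hx : ∀ i j, 0 ≤ x i j) : 0 ≤ cost C x :=
  sum_nonneg fun i _ => sum_nonneg fun j _ => mul_nonneg (hC i j) (hx i j)

lemma cost_le_cost_of_le_left {C C' x : Fin m → Fin n → ℝ} (hCC' : ∀ i j, C i j ≤ C' i j)
    (hx : ∀ i j, 0 ≤ x i j) : cost C x ≤ cost C' x :=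
  sum_le_sum fun i _ => sum_le_sum fun j _ =>
    mul_le_mul_of_nonneg_right (hCC' i j) (hx i j)

lemma cost_le_cost_of_le_right {C x y : Fin m → Fin n → ℝ} (hC : ∀ i j, 0 ≤ C i j)
    (hyx : ∀ i j, y i j ≤ x i j) : cost C y ≤ cost C x :=
  sum_le_sum fun i _ => sum_le_sum fun j _ => mul_le_mul_of_nonneg_left (hyx i j) (hC i j)

lemma exists_isPlan {s : Fin m → ℝ} {d : Fin n → ℝ} (hs : ∀ i, 0 ≤ s i)
    (hd : ∀ j, 0 ≤ d j) (hds : ∑ j, d j ≤ ∑ i, s i) : ∃ x, IsPlan s d x := by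
  rcases (sum_nonneg fun i _ => hs i).eq_or_lt with hS | hS
  · have hd0 : ∀ j, d j = 0 := fun j =>
      (sum_eq_zero_iff_of_nonneg fun j _ => hd j).1
        (le_antisymm (hS ▸ hds) (sum_nonneg fun j _ => hd j)) j (mem_univ j)
    exact ⟨0, fun _ _ => le_rfl, fun i => by simpa using hs i, fun j => by simp [hd0 j]⟩
  -- ship to each customer `j` from each supplier `i` in proportion to `s i`
  refine ⟨fun i j => s i * d j / ∑ i, s i,
    fun i j => div_nonneg (mul_nonneg (hs i) (hd j)) hS.le, fun i => ?_, fun j => ?_⟩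
  · rw [← sum_div, ← mul_sum, div_le_iff₀ hS]
    exact mul_le_mul_of_nonneg_left hds (hs i)
  · rw [← sum_div, ← sum_mul]
    field_simp

lemma IsPlan.mono_supply {s s' : Fin m → ℝ} {d : Fin n → ℝ} {x : Fin m → Fin n → ℝ}
    (hx : IsPlan s d x) (hss' : ∀ i, s i ≤ s' i) : IsPlan s' d x :=
  ⟨hx.1, fun i => (hx.2.1 i).trans (hss' i), hx.2.2⟩

/-- When `d' j = 0` the ratio `d j / d' j` is the junk value `0`, harmless since then `d j = 0`. -/
lemma IsPlan.scale_demand {s : Fin m → ℝ} {d d' : Fin n → ℝ} {x : Fin m → Fin n → ℝ}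
    (hx : IsPlan s d' x) (hd : ∀ j, 0 ≤ d j) (hdd' : ∀ j, d j ≤ d' j) :
    IsPlan s d (fun i j => x i j * (d j / d' j)) ∧ ∀ i j, x i j * (d j / d' j) ≤ x i j := by
  obtain ⟨hx0, hxs, hxd⟩ := hx
  have hratio0 : ∀ j, 0 ≤ d j / d' j := fun j => div_nonneg (hd j) ((hd j).trans (hdd' j))
  have hratio1 : ∀ j, d j / d' j ≤ 1 := fun j => div_le_one_of_le₀ (hdd' j) ((hd j).trans (hdd' j))
  have hle : ∀ i j, x i j * (d j / d' j) ≤ x i j := fun i j =>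
    mul_le_of_le_one_right (hx0 i j) (hratio1 j)
  refine ⟨⟨fun i j => mul_nonneg (hx0 i j) (hratio0 j),
    fun i => (sum_le_sum fun j _ => hle i j).trans (hxs i), fun j => ?_⟩, hle⟩
  rw [← sum_mul, hxd j]
  rcases eq_or_ne (d' j) 0 with h0 | h0
  · simp [h0, le_antisymm (h0 ▸ hdd' j) (hd j)]
  · exact mul_div_cancel₀ _ h0

lemma optVal_le_optVal_of_forall_isPlan {C C' : Fin m → Fin n → ℝ} {s s' : Fin m → ℝ}
    {d d' : Fin n → ℝ} (hC : ∀ i j, 0 ≤ C i j) (hfeas : ∃ x, IsPlan s' d' x)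
    (h : ∀ x, IsPlan s' d' x → ∃ y, IsPlan s d y ∧ cost C y ≤ cost C' x) :
    optVal C s d ≤ optVal C' s' d' := by
  have hbdd : BddBelow (cost C '' {y | IsPlan s d y}) := by
    refine ⟨0, ?_⟩
    rintro _ ⟨y, hy, rfl⟩
    exact cost_nonneg hC hy.1
  obtain ⟨x₀, hx₀⟩ := hfeas
  refine le_csInf ⟨cost C' x₀, x₀, hx₀, rfl⟩ ?_
  rintro _ ⟨x, hx, rfl⟩
  obtain ⟨y, hy, hyx⟩ := h x hx
  exact (csInf_le hbdd ⟨y, hy, rfl⟩).trans hyx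

variable {C : Fin m → Fin n → ℝ} {s : Fin m → ℝ} {d : Fin n → ℝ}

lemma optVal_mono_cost {C' : Fin m → Fin n → ℝ} (hC : ∀ i j, 0 ≤ C i j)
    (hCC' : ∀ i j, C i j ≤ C' i j) (hfeas : ∃ x, IsPlan s d x) :
    optVal C s d ≤ optVal C' s d :=
  optVal_le_optVal_of_forall_isPlan hC hfeas fun x hx =>
    ⟨x, hx, cost_le_cost_of_le_left hCC' hx.1⟩

lemma optVal_antitone_supply {s' : Fin m → ℝ} (hC : ∀ i j, 0 ≤ C i j)
    (hss' : ∀ i, s i ≤ s' i) (hfeas : ∃ x, IsPlan s d x) :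
    optVal C s' d ≤ optVal C s d :=
  optVal_le_optVal_of_forall_isPlan hC hfeas fun x hx => ⟨x, hx.mono_supply hss', le_rfl⟩

lemma optVal_mono_demand {d' : Fin n → ℝ} (hC : ∀ i j, 0 ≤ C i j) (hd : ∀ j, 0 ≤ d j)
    (hdd' : ∀ j, d j ≤ d' j) (hfeas : ∃ x, IsPlan s d' x) :
    optVal C s d ≤ optVal C s d' :=
  optVal_le_optVal_of_forall_isPlan hC hfeas fun _ hx =>
    let ⟨hy, hyx⟩ := hx.scale_demand hd hdd'
    ⟨_, hy, cost_le_cost_of_le_right hC hyx⟩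

end Transportation

/-- If all scenarios are feasible, the worst optimal value over all scenarios is
attained at the scenario (C̄, s̲, d̄). -/
theorem worst_value_all_feasible {m n : ℕ} (Cl Cu : Fin m → Fin n → ℝ)
    (sl su : Fin m → ℝ) (dl du : Fin n → ℝ)
    (hCl : ∀ i j, 0 ≤ Cl i j) (hC : ∀ i j, Cl i j ≤ Cu i j)
    (hsl : ∀ i, 0 ≤ sl i) (hslsu : ∀ i, sl i ≤ su i)
    (hdl : ∀ j, 0 ≤ dl j) (hdldu : ∀ j, dl j ≤ du j)
    (hallfeas : ∑ j, du j ≤ ∑ i, sl i) :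
    IsGreatest {v | ∃ (C : Fin m → Fin n → ℝ) (s : Fin m → ℝ) (d : Fin n → ℝ),
        (∀ i j, Cl i j ≤ C i j ∧ C i j ≤ Cu i j) ∧
        (∀ i, sl i ≤ s i ∧ s i ≤ su i) ∧
        (∀ j, dl j ≤ d j ∧ d j ≤ du j) ∧ v = optVal C s d}
      (optVal Cu sl du) := by
  refine ⟨⟨Cu, sl, du, fun i j => ⟨hC i j, le_rfl⟩, fun i => ⟨le_rfl, hslsu i⟩,
    fun j => ⟨hdldu j, le_rfl⟩, rfl⟩, ?_⟩
  rintro _ ⟨C, s, d, hCb, hsb, hdb, rfl⟩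
  have hC0 : ∀ i j, 0 ≤ C i j := fun i j => (hCl i j).trans (hCb i j).1
  have hd0 : ∀ j, 0 ≤ d j := fun j => (hdl j).trans (hdb j).1
  have hfeas : ∃ x, IsPlan sl du x :=
    exists_isPlan hsl (fun j => (hdl j).trans (hdldu j)) hallfeas
  have hfeas_d : ∃ x, IsPlan sl d x :=
    exists_isPlan hsl hd0 ((sum_le_sum fun j _ => (hdb j).2).trans hallfeas)
  calc optVal C s d ≤ optVal C sl d := optVal_antitone_supply hC0 (fun i => (hsb i).1) hfeas_d
    _ ≤ optVal C sl du := optVal_mono_demand hC0 hd0 (fun j => (hdb j).2) hfeas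
    _ ≤ optVal Cu sl du := optVal_mono_cost hC0 (fun i j => (hCb i j).2) hfeas
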